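/- arXiv:1708.00915 — 2 statements merged into one kernel-verified Lean document; each statement's English description precedes it below -/
import Mathlib

section
/- Let n ≥ 2 and let {A(t)}_{t≥0} be a sequence of row-stochastic n×n matrices such that each transpose A'(t) is of out-degree form, and suppose {A(t)} is strongly aperiodic and has the directed infinite flow property. Then for every s ≥ 0 there exists a vector φ(s) ∈ ℝⁿ such that for all i, j ∈ [n] and all t ≥ s, |[A(t:s)]_{ij} − φ_j(s)| ≤ Λ_{t,s}, where Λ_{t,s} = ∏_{q∈Q_{t,s}} (1 − 1/n^{ℓ_q}) and each factor 1 − 1/n^{ℓ_q} lies in (0,1). -/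
open Finset MeasureTheory

/-- `A_{S S̄} = ∑_{i ∈ S, j ∉ S} A i j`. -/
def flowSum {n : ℕ} (A : Matrix (Fin n) (Fin n) ℝ) (S : Finset (Fin n)) : ℝ :=
  ∑ i ∈ S, ∑ j ∈ Sᶜ, A i j

/-- `S` is a nontrivial subset of `[n]`. -/
def NontrivialSubset {n : ℕ} (S : Finset (Fin n)) : Prop :=
  S.Nonempty ∧ S ≠ Finset.univ

/-- Directed infinite flow property: for every nontrivial `S`, `∑_t A_{S S̄}(t) = ∞`. -/
def DirectedInfiniteFlow {n : ℕ} (A : ℕ → Matrix (Fin n) (Fin n) ℝ) : Prop :=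
  ∀ S : Finset (Fin n), NontrivialSubset S →
    Filter.Tendsto (fun T => ∑ t ∈ Finset.range T, flowSum (A t) S)
      Filter.atTop Filter.atTop

/-- The backward product `A(t:s) = A(t) A(t-1) ⋯ A(s)`. -/
def matProd {n : ℕ} (A : ℕ → Matrix (Fin n) (Fin n) ℝ) (t s : ℕ) :
    Matrix (Fin n) (Fin n) ℝ :=
  (((List.range (t + 1 - s)).map fun k => A (t - k))).prod

/-- Row-stochastic nonnegative matrix. -/
def RowStochastic {n : ℕ} (A : Matrix (Fin n) (Fin n) ℝ) : Prop :=
  (∀ i j, 0 ≤ A i j) ∧ ∀ i, ∑ j, A i j = 1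

/-- Column-stochastic nonnegative matrix. -/
def ColStochastic {n : ℕ} (A : Matrix (Fin n) (Fin n) ℝ) : Prop :=
  (∀ i j, 0 ≤ A i j) ∧ ∀ j, ∑ i, A i j = 1

/-- `W` is the degree-normalized adjacency matrix of a digraph with all self-loops:
`W i j = 1 / (out-degree of j)` if there is an edge from `j` to `i`, else `0`. -/
def OutDegreeForm {n : ℕ} (W : Matrix (Fin n) (Fin n) ℝ) : Prop :=
  ∃ N : Fin n → Finset (Fin n), (∀ j, j ∈ N j) ∧
    ∀ i j, W i j = if i ∈ N j then (1 : ℝ) / (N j).card else 0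

/-- Strong aperiodicity of a sequence of matrices. -/
def StronglyAperiodic {n : ℕ} (A : ℕ → Matrix (Fin n) (Fin n) ℝ) : Prop :=
  ∃ γ : ℝ, 0 < γ ∧ ∀ t i, γ ≤ A t i i

/-- The times `k_q`: `k_0 = 0` and `k_q` is the least `t' > k_{q-1}` with
nonzero flow `∑_{t=k_{q-1}}^{t'-1} A_{S S̄}(t) > 0` across every nontrivial cut. -/
noncomputable def kSeq {n : ℕ} (A : ℕ → Matrix (Fin n) (Fin n) ℝ) : ℕ → ℕ
  | 0 => 0
  | q + 1 => sInf {t' : ℕ | kSeq A q < t' ∧ ∀ S : Finset (Fin n), NontrivialSubset S →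
      0 < ∑ t ∈ Finset.Ico (kSeq A q) t', flowSum (A t) S}

/-- `ℓ_q = k_{qn} - k_{(q-1)n}`. -/
noncomputable def ellSeq {n : ℕ} (A : ℕ → Matrix (Fin n) (Fin n) ℝ) (q : ℕ) : ℕ :=
  kSeq A (q * n) - kSeq A ((q - 1) * n)

/-- The index set `Q_{t,s} = {q ≥ 1 : s ≤ k_{(q-1)n}, k_{qn} ≤ t}` (as a `Finset`). -/
noncomputable def QSet {n : ℕ} (A : ℕ → Matrix (Fin n) (Fin n) ℝ) (t s : ℕ) :
    Finset ℕ :=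
  (Finset.Icc 1 t).filter fun q => s ≤ kSeq A ((q - 1) * n) ∧ kSeq A (q * n) ≤ t

/-- `Λ_{t,s} = ∏_{q ∈ Q_{t,s}} (1 - 1/n^{ℓ_q})`. -/
noncomputable def Lam {n : ℕ} (A : ℕ → Matrix (Fin n) (Fin n) ℝ) (t s : ℕ) : ℝ :=
  ∏ q ∈ QSet A t s, (1 - 1 / (n : ℝ) ^ (ellSeq A q))

/-- Push-sum iterates: `u(0) = u0`, `u(t+1) = W(t) u(t)`. -/
def pushIter {n : ℕ} (W : ℕ → Matrix (Fin n) (Fin n) ℝ) (u0 : Fin n → ℝ) : ℕ → Fin n → ℝ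
  | 0 => u0
  | t + 1 => (W t).mulVec (pushIter W u0 t)

/-- A nonnegative matrix is irreducible if the digraph with an edge from `j` to `i`
whenever `A i j > 0` is strongly connected. -/
def IrreducibleMat {n : ℕ} (A : Matrix (Fin n) (Fin n) ℝ) : Prop :=
  ∀ i j : Fin n, Relation.ReflTransGen (fun a b => 0 < A b a) i j



section AuxCP

variable {n : ℕ}

/-- Forward block product `A(b-1) ⋯ A(a)` over the interval `[a, b)`. -/
def blkCP (A : ℕ → Matrix (Fin n) (Fin n) ℝ) (a b : ℕ) : Matrix (Fin n) (Fin n) ℝ :=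
  ((List.range (b - a)).map fun k => A (b - 1 - k)).prod

lemma blkCP_of_le (A : ℕ → Matrix (Fin n) (Fin n) ℝ) {a b : ℕ} (h : b ≤ a) :
    blkCP A a b = 1 := by
  simp [blkCP, Nat.sub_eq_zero_of_le h]

lemma blkCP_succ (A : ℕ → Matrix (Fin n) (Fin n) ℝ) {a b : ℕ} (h : a ≤ b) :
    blkCP A a (b + 1) = A b * blkCP A a b := by
  have h1 : b + 1 - a = (b - a) + 1 := by omega
  rw [blkCP, h1, List.range_succ_eq_map, List.map_cons, List.prod_cons, List.map_map]
  congr 1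
  rw [blkCP]
  refine congrArg List.prod (List.map_congr_left fun k _ => ?_)
  simp only [Function.comp_apply]
  have : b + 1 - 1 - k.succ = b - 1 - k := by omega
  rw [this]

lemma blkCP_mul (A : ℕ → Matrix (Fin n) (Fin n) ℝ) {a b c : ℕ} (hab : a ≤ b) (hbc : b ≤ c) :
    blkCP A a c = blkCP A b c * blkCP A a b := by
  induction c, hbc using Nat.le_induction with
  | base => rw [blkCP_of_le A le_rfl, one_mul]
  | succ c hbc ih =>
    rw [blkCP_succ A (hab.trans hbc), blkCP_succ A hbc, ih, Matrix.mul_assoc]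

lemma matProd_eq_blkCP (A : ℕ → Matrix (Fin n) (Fin n) ℝ) (t s : ℕ) :
    matProd A t s = blkCP A s (t + 1) := by
  simp [matProd, blkCP]

lemma entryCP_lb {A : ℕ → Matrix (Fin n) (Fin n) ℝ} (hn0 : 0 < n)
    (hOD : ∀ t, OutDegreeForm (A t).transpose) :
    ∀ t i j, A t i j ≠ 0 → (1 : ℝ) / n ≤ A t i j := by
  intro t i j hne
  obtain ⟨N, hself, hval⟩ := hOD t
  have h := hval j i
  rw [Matrix.transpose_apply] at h
  rw [h] at hne ⊢
  by_cases hj : j ∈ N i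
  · rw [if_pos hj] at *
    have hcard1 : 0 < (N i).card := Finset.card_pos.mpr ⟨i, hself i⟩
    have hcardn : (N i).card ≤ n := le_trans (Finset.card_le_univ _) (by simp)
    apply one_div_le_one_div_of_le
    · exact_mod_cast hcard1
    · exact_mod_cast hcardn
  · rw [if_neg hj] at hne; exact absurd rfl hne

lemma entryCP_diag_pos {A : ℕ → Matrix (Fin n) (Fin n) ℝ} (hn0 : 0 < n)
    (hOD : ∀ t, OutDegreeForm (A t).transpose) :
    ∀ t i, 0 < A t i i := by
  intro t i
  obtain ⟨N, hself, hval⟩ := hOD t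
  have h := hval i i
  rw [Matrix.transpose_apply] at h
  rw [h, if_pos (hself i)]
  have hcard1 : 0 < (N i).card := Finset.card_pos.mpr ⟨i, hself i⟩
  positivity

lemma blkCP_nonneg {A : ℕ → Matrix (Fin n) (Fin n) ℝ}
    (hA0 : ∀ t i j, 0 ≤ A t i j) (a : ℕ) :
    ∀ b i j, 0 ≤ blkCP A a b i j := by
  intro b
  induction b with
  | zero =>
    intro i j
    rw [blkCP_of_le A (Nat.zero_le a), Matrix.one_apply]
    split <;> norm_num
  | succ b ih =>
    intro i j
    rcases le_or_gt a b with hab | hab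
    · rw [blkCP_succ A hab, Matrix.mul_apply]
      exact Finset.sum_nonneg fun k _ => mul_nonneg (hA0 b i k) (ih k j)
    · rw [blkCP_of_le A (by omega), Matrix.one_apply]
      split <;> norm_num

lemma blkCP_rowsum {A : ℕ → Matrix (Fin n) (Fin n) ℝ}
    (hA1 : ∀ t i, ∑ j, A t i j = 1) (a : ℕ) :
    ∀ b i, ∑ j, blkCP A a b i j = 1 := by
  intro b
  induction b with
  | zero =>
    intro i
    rw [blkCP_of_le A (Nat.zero_le a)]
    simp [Matrix.one_apply]
  | succ b ih =>
    intro i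
    rcases le_or_gt a b with hab | hab
    · rw [blkCP_succ A hab]
      simp only [Matrix.mul_apply]
      rw [Finset.sum_comm]
      calc ∑ k, ∑ j, A b i k * blkCP A a b k j
          = ∑ k, A b i k * ∑ j, blkCP A a b k j := by
            simp [Finset.mul_sum]
        _ = ∑ k, A b i k := by simp [ih]
        _ = 1 := hA1 b i
    · rw [blkCP_of_le A (by omega)]
      simp [Matrix.one_apply]

lemma blkCP_diag_pos {A : ℕ → Matrix (Fin n) (Fin n) ℝ}
    (hA0 : ∀ t i j, 0 ≤ A t i j) (hdiag : ∀ t i, 0 < A t i i) (a : ℕ) :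
    ∀ b i, 0 < blkCP A a b i i := by
  intro b
  induction b with
  | zero =>
    intro i
    rw [blkCP_of_le A (Nat.zero_le a), Matrix.one_apply_eq]
    norm_num
  | succ b ih =>
    intro i
    rcases le_or_gt a b with hab | hab
    · rw [blkCP_succ A hab, Matrix.mul_apply]
      have h1 : 0 < A b i i * blkCP A a b i i := mul_pos (hdiag b i) (ih i)
      have h2 : A b i i * blkCP A a b i i ≤ ∑ k, A b i k * blkCP A a b k i :=
        Finset.single_le_sum (fun k _ => mul_nonneg (hA0 b i k) (blkCP_nonneg hA0 a b k i))
          (Finset.mem_univ i)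
      linarith
    · rw [blkCP_of_le A (by omega), Matrix.one_apply_eq]
      norm_num

lemma blkCP_entry_lb {A : ℕ → Matrix (Fin n) (Fin n) ℝ}
    (hA0 : ∀ t i j, 0 ≤ A t i j)
    (hlb : ∀ t i j, A t i j ≠ 0 → (1 : ℝ) / n ≤ A t i j) (a : ℕ) :
    ∀ b i j, 0 < blkCP A a b i j → ((1 : ℝ) / n) ^ (b - a) ≤ blkCP A a b i j := by
  intro b
  induction b with
  | zero =>
    intro i j hpos
    rw [blkCP_of_le A (Nat.zero_le a)] at *
    rw [Nat.zero_sub, pow_zero]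
    rw [Matrix.one_apply] at hpos ⊢
    split
    · norm_num
    · rename_i hij; rw [if_neg hij] at hpos; norm_num at hpos
  | succ b ih =>
    intro i j hpos
    rcases le_or_gt a b with hab | hab
    · rw [blkCP_succ A hab, Matrix.mul_apply] at hpos ⊢
      obtain ⟨k, -, hk⟩ : ∃ k ∈ Finset.univ, 0 < A b i k * blkCP A a b k j := by
        by_contra hcon
        push_neg at hcon
        have : ∑ k, A b i k * blkCP A a b k j ≤ 0 :=
          Finset.sum_nonpos fun k hkk => hcon k hkk
        linarith
      have hAk : 0 < A b i k := by
        rcases (mul_pos_iff.mp hk) with ⟨h1, _⟩ | ⟨h1, h2⟩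
        · exact h1
        · exact absurd h2 (not_lt.mpr (blkCP_nonneg hA0 a b k j))
      have hBk : 0 < blkCP A a b k j := by
        rcases (mul_pos_iff.mp hk) with ⟨_, h2⟩ | ⟨h1, _⟩
        · exact h2
        · exact absurd h1 (not_lt.mpr (hA0 b i k))
      have hsum : A b i k * blkCP A a b k j ≤ ∑ l, A b i l * blkCP A a b l j :=
        Finset.single_le_sum (fun l _ => mul_nonneg (hA0 b i l) (blkCP_nonneg hA0 a b l j))
          (Finset.mem_univ k)
      have h1n : (1 : ℝ) / n ≤ A b i k := hlb b i k (ne_of_gt hAk)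
      have h2n : ((1 : ℝ) / n) ^ (b - a) ≤ blkCP A a b k j := ih k j hBk
      have hsub : b + 1 - a = (b - a) + 1 := by omega
      rw [hsub, pow_succ]
      have hn0' : (0:ℝ) ≤ 1 / n := by positivity
      calc ((1:ℝ)/n) ^ (b - a) * (1/n)
          ≤ blkCP A a b k j * A b i k := by
            apply mul_le_mul h2n h1n hn0' (le_of_lt hBk)
        _ = A b i k * blkCP A a b k j := by ring
        _ ≤ _ := hsum
    · rw [blkCP_of_le A (by omega)] at *
      rw [Nat.sub_eq_zero_of_le (by omega), pow_zero]
      rw [Matrix.one_apply] at hpos ⊢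
      split
      · norm_num
      · rename_i hij; rw [if_neg hij] at hpos; norm_num at hpos

lemma mul_entryCP_le {X Y : Matrix (Fin n) (Fin n) ℝ}
    (hX : ∀ i j, 0 ≤ X i j) (hY : ∀ i j, 0 ≤ Y i j) (i k j : Fin n) :
    X i k * Y k j ≤ (X * Y) i j := by
  rw [Matrix.mul_apply]
  exact Finset.single_le_sum (fun l _ => mul_nonneg (hX i l) (hY l j)) (Finset.mem_univ k)

lemma flowSumCP_nonneg {A : Matrix (Fin n) (Fin n) ℝ} (hA0 : ∀ i j, 0 ≤ A i j)
    (S : Finset (Fin n)) : 0 ≤ flowSum A S :=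
  Finset.sum_nonneg fun i _ => Finset.sum_nonneg fun j _ => hA0 i j

lemma kSetCP_nonempty {A : ℕ → Matrix (Fin n) (Fin n) ℝ}
    (hA0 : ∀ t i j, 0 ≤ A t i j) (hflow : DirectedInfiniteFlow A) (r : ℕ) :
    {t' : ℕ | r < t' ∧ ∀ S : Finset (Fin n), NontrivialSubset S →
      0 < ∑ t ∈ Finset.Ico r t', flowSum (A t) S}.Nonempty := by
  classical
  have key : ∀ S : Finset (Fin n), ∃ T : ℕ, NontrivialSubset S →
      0 < ∑ t ∈ Finset.Ico r T, flowSum (A t) S := by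
    intro S
    by_cases hS : NontrivialSubset S
    · have htd := hflow S hS
      rw [Filter.tendsto_atTop] at htd
      obtain ⟨T0, hT0⟩ := (htd ((∑ t ∈ Finset.range r, flowSum (A t) S) + 1)).exists_forall_of_atTop
      refine ⟨max T0 r, fun _ => ?_⟩
      have h1 := hT0 (max T0 r) (le_max_left _ _)
      have h2 : ∑ t ∈ Finset.Ico r (max T0 r), flowSum (A t) S
          = ∑ t ∈ Finset.range (max T0 r), flowSum (A t) S
            - ∑ t ∈ Finset.range r, flowSum (A t) S := by
        rw [Finset.sum_Ico_eq_sub _ (le_max_right _ _)]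
      rw [h2]; linarith
    · exact ⟨0, fun h => absurd h hS⟩
  choose T hT using key
  refine ⟨max (Finset.univ.sup T) r + 1, ?_, ?_⟩
  · omega
  · intro S hS
    have h1 := hT S hS
    have hsub : Finset.Ico r (T S) ⊆ Finset.Ico r (max (Finset.univ.sup T) r + 1) := by
      apply Finset.Ico_subset_Ico le_rfl
      have : T S ≤ Finset.univ.sup T := Finset.le_sup (Finset.mem_univ S)
      omega
    calc (0:ℝ) < ∑ t ∈ Finset.Ico r (T S), flowSum (A t) S := h1
      _ ≤ _ := Finset.sum_le_sum_of_subset_of_nonneg hsub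
          (fun t _ _ => flowSumCP_nonneg (hA0 t) S)

lemma kSeqCP_mem {A : ℕ → Matrix (Fin n) (Fin n) ℝ}
    (hA0 : ∀ t i j, 0 ≤ A t i j) (hflow : DirectedInfiniteFlow A) (q : ℕ) :
    kSeq A q < kSeq A (q + 1) ∧ ∀ S : Finset (Fin n), NontrivialSubset S →
      0 < ∑ t ∈ Finset.Ico (kSeq A q) (kSeq A (q + 1)), flowSum (A t) S := by
  have h := Nat.sInf_mem (kSetCP_nonempty hA0 hflow (kSeq A q))
  exact h

lemma kSeqCP_strictMono {A : ℕ → Matrix (Fin n) (Fin n) ℝ}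
    (hA0 : ∀ t i j, 0 ≤ A t i j) (hflow : DirectedInfiniteFlow A) :
    StrictMono (kSeq A) :=
  strictMono_nat_of_lt_succ fun q => (kSeqCP_mem hA0 hflow q).1

lemma crossCP {A : ℕ → Matrix (Fin n) (Fin n) ℝ}
    (hA0 : ∀ t i j, 0 ≤ A t i j) (hflow : DirectedInfiniteFlow A)
    (hdiag : ∀ t i, 0 < A t i i) (q : ℕ) (S : Finset (Fin n))
    (hS : NontrivialSubset S) :
    ∃ u ∉ S, ∃ v ∈ S, 0 < blkCP A (kSeq A q) (kSeq A (q + 1)) u v := by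
  classical
  have hSc : NontrivialSubset Sᶜ := by
    constructor
    · have hx : ∃ x, x ∉ S := by
        by_contra hc
        push_neg at hc
        exact hS.2 (Finset.eq_univ_iff_forall.mpr hc)
      obtain ⟨x, hxx⟩ := hx
      exact ⟨x, Finset.mem_compl.mpr hxx⟩
    · intro h
      exact hS.1.ne_empty (by simpa using congrArg compl h)
  obtain ⟨hlt, hpos⟩ := kSeqCP_mem hA0 hflow q
  have h2 := hpos Sᶜ hSc
  obtain ⟨t, ht, htpos⟩ : ∃ t ∈ Finset.Ico (kSeq A q) (kSeq A (q+1)), 0 < flowSum (A t) Sᶜ := by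
    by_contra hcon
    push_neg at hcon
    have : ∑ t ∈ Finset.Ico (kSeq A q) (kSeq A (q+1)), flowSum (A t) Sᶜ ≤ 0 :=
      Finset.sum_nonpos fun t htt => hcon t htt
    linarith
  obtain ⟨u, hu, v, hv, huv⟩ : ∃ u ∈ Sᶜ, ∃ v ∈ Sᶜᶜ, 0 < A t u v := by
    by_contra hcon
    push_neg at hcon
    have : flowSum (A t) Sᶜ ≤ 0 :=
      Finset.sum_nonpos fun u huu => Finset.sum_nonpos fun v hvv => hcon u huu v hvv
    linarith
  rw [compl_compl] at hv
  rw [Finset.mem_compl] at hu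
  refine ⟨u, hu, v, hv, ?_⟩
  rw [Finset.mem_Ico] at ht
  have hd1 : blkCP A (kSeq A q) (kSeq A (q+1))
      = blkCP A (t+1) (kSeq A (q+1)) * blkCP A (kSeq A q) (t+1) :=
    blkCP_mul A (by omega) (by omega)
  have hd2 : blkCP A (kSeq A q) (t+1) = A t * blkCP A (kSeq A q) t :=
    blkCP_succ A ht.1
  have e1 : A t u v * blkCP A (kSeq A q) t v v ≤ blkCP A (kSeq A q) (t+1) u v := by
    rw [hd2]
    exact mul_entryCP_le (hA0 t) (blkCP_nonneg hA0 _ _) u v v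
  have e2 : blkCP A (t+1) (kSeq A (q+1)) u u * blkCP A (kSeq A q) (t+1) u v
      ≤ blkCP A (kSeq A q) (kSeq A (q+1)) u v := by
    rw [hd1]
    exact mul_entryCP_le (blkCP_nonneg hA0 _ _) (blkCP_nonneg hA0 _ _) u u v
  have p1 : 0 < A t u v * blkCP A (kSeq A q) t v v :=
    mul_pos huv (blkCP_diag_pos hA0 hdiag _ _ v)
  have p2 : 0 < blkCP A (t+1) (kSeq A (q+1)) u u * blkCP A (kSeq A q) (t+1) u v :=
    mul_pos (blkCP_diag_pos hA0 hdiag _ _ u) (lt_of_lt_of_le p1 e1)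
  exact lt_of_lt_of_le p2 e2

lemma blockCP_all_pos {A : ℕ → Matrix (Fin n) (Fin n) ℝ}
    (hA0 : ∀ t i j, 0 ≤ A t i j) (hflow : DirectedInfiniteFlow A)
    (hdiag : ∀ t i, 0 < A t i i) (r : ℕ) (i j : Fin n) :
    0 < blkCP A (kSeq A r) (kSeq A (r + n)) i j := by
  classical
  have hkmono : StrictMono (kSeq A) := kSeqCP_strictMono hA0 hflow
  set S : ℕ → Finset (Fin n) :=
    fun m => Finset.univ.filter fun i => 0 < blkCP A (kSeq A r) (kSeq A (r + m)) i j with hSdef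
  have hj : ∀ m, j ∈ S m := by
    intro m
    rw [hSdef]
    exact Finset.mem_filter.mpr ⟨Finset.mem_univ j, blkCP_diag_pos hA0 hdiag _ _ j⟩
  have hmul : ∀ m u v, v ∈ S m →
      0 < blkCP A (kSeq A (r + m)) (kSeq A (r + m + 1)) u v → u ∈ S (m+1) := by
    intro m u v hv hpos
    have hvpos : 0 < blkCP A (kSeq A r) (kSeq A (r + m)) v j := by
      have := Finset.mem_filter.mp hv
      exact this.2
    have hdec : blkCP A (kSeq A r) (kSeq A (r + m + 1))
        = blkCP A (kSeq A (r+m)) (kSeq A (r+m+1)) * blkCP A (kSeq A r) (kSeq A (r+m)) :=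
      blkCP_mul A (hkmono.monotone (by omega)) (hkmono.monotone (by omega))
    have e : blkCP A (kSeq A (r+m)) (kSeq A (r+m+1)) u v
          * blkCP A (kSeq A r) (kSeq A (r+m)) v j
        ≤ blkCP A (kSeq A r) (kSeq A (r + m + 1)) u j := by
      rw [hdec]
      exact mul_entryCP_le (blkCP_nonneg hA0 _ _) (blkCP_nonneg hA0 _ _) u v j
    have : 0 < blkCP A (kSeq A r) (kSeq A (r + m + 1)) u j :=
      lt_of_lt_of_le (mul_pos hpos hvpos) e
    rw [hSdef]
    refine Finset.mem_filter.mpr ⟨Finset.mem_univ u, ?_⟩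
    have hrm : r + (m + 1) = r + m + 1 := by omega
    rw [hrm]
    exact this
  have hsub : ∀ m, S m ⊆ S (m+1) := by
    intro m u hu
    exact hmul m u u hu (blkCP_diag_pos hA0 hdiag _ _ u)
  have hgrow : ∀ m, S m ≠ Finset.univ → ∃ u, u ∉ S m ∧ u ∈ S (m+1) := by
    intro m hne
    have hSm : NontrivialSubset (S m) := ⟨⟨j, hj m⟩, hne⟩
    obtain ⟨u, hu, v, hv, huv⟩ := crossCP hA0 hflow hdiag (r + m) (S m) hSm
    exact ⟨u, hu, hmul m u v hv huv⟩
  have hcard : ∀ m, S m = Finset.univ ∨ m + 1 ≤ (S m).card := by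
    intro m
    induction m with
    | zero =>
      right
      exact Finset.card_pos.mpr ⟨j, hj 0⟩
    | succ m ih =>
      rcases ih with h | h
      · left
        apply Finset.univ_subset_iff.mp
        rw [← h]; exact hsub m
      · by_cases hne : S m = Finset.univ
        · left
          apply Finset.univ_subset_iff.mp
          rw [← hne]; exact hsub m
        · right
          obtain ⟨u, hu1, hu2⟩ := hgrow m hne
          have hss : S m ⊂ S (m+1) := Finset.ssubset_iff_of_subset (hsub m) |>.mpr ⟨u, hu2, hu1⟩
          have := Finset.card_lt_card hss
          omega
  have hfin : S n = Finset.univ := by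
    rcases hcard n with h | h
    · exact h
    · exfalso
      have : (S n).card ≤ n := le_trans (Finset.card_le_univ _) (by simp)
      omega
  have : i ∈ S n := by rw [hfin]; exact Finset.mem_univ i
  exact (Finset.mem_filter.mp this).2

lemma mulVecCP_ge {B : Matrix (Fin n) (Fin n) ℝ}
    (h0 : ∀ i j, 0 ≤ B i j) (h1 : ∀ i, ∑ j, B i j = 1)
    {x : Fin n → ℝ} {c : ℝ} (hc : ∀ k, c ≤ x k) (i : Fin n) :
    c ≤ B.mulVec x i := by
  have : B.mulVec x i = ∑ k, B i k * x k := by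
    simp [Matrix.mulVec, dotProduct]
  rw [this]
  calc c = ∑ k, B i k * c := by rw [← Finset.sum_mul, h1 i, one_mul]
    _ ≤ ∑ k, B i k * x k :=
      Finset.sum_le_sum fun k _ => mul_le_mul_of_nonneg_left (hc k) (h0 i k)

lemma mulVecCP_le {B : Matrix (Fin n) (Fin n) ℝ}
    (h0 : ∀ i j, 0 ≤ B i j) (h1 : ∀ i, ∑ j, B i j = 1)
    {x : Fin n → ℝ} {c : ℝ} (hc : ∀ k, x k ≤ c) (i : Fin n) :
    B.mulVec x i ≤ c := by
  have : B.mulVec x i = ∑ k, B i k * x k := by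
    simp [Matrix.mulVec, dotProduct]
  rw [this]
  calc ∑ k, B i k * x k ≤ ∑ k, B i k * c :=
      Finset.sum_le_sum fun k _ => mul_le_mul_of_nonneg_left (hc k) (h0 i k)
    _ = c := by rw [← Finset.sum_mul, h1 i, one_mul]

lemma oscCP_upper {B : Matrix (Fin n) (Fin n) ℝ} {δ : ℝ} (hδ0 : 0 ≤ δ)
    (hB : ∀ i j, δ ≤ B i j) (h1 : ∀ i, ∑ j, B i j = 1)
    {x : Fin n → ℝ} {m M : ℝ} {j0 : Fin n} (hj0 : x j0 = m)
    (hxM : ∀ k, x k ≤ M) (i : Fin n) :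
    B.mulVec x i ≤ M - δ * (M - m) := by
  classical
  have h0 : ∀ i j, 0 ≤ B i j := fun i j => le_trans hδ0 (hB i j)
  have e1 : B.mulVec x i - M = ∑ k, B i k * (x k - M) := by
    simp only [Matrix.mulVec, dotProduct, mul_sub, Finset.sum_sub_distrib,
      ← Finset.sum_mul, h1 i, one_mul]
  have e2 : ∑ k, B i k * (x k - M) ≤ ∑ k, (if k = j0 then δ * (m - M) else 0) := by
    apply Finset.sum_le_sum
    intro k _
    by_cases hk : k = j0
    · subst hk
      rw [if_pos rfl, hj0]
      exact mul_le_mul_of_nonpos_right (hB i k) (by linarith [hj0 ▸ hxM k])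
    · rw [if_neg hk]
      exact mul_nonpos_of_nonneg_of_nonpos (h0 i k) (by linarith [hxM k])
  have e3 : ∑ k, (if k = j0 then δ * (m - M) else 0) = δ * (m - M) := by simp
  rw [e3] at e2
  linarith

lemma oscCP_lower {B : Matrix (Fin n) (Fin n) ℝ} {δ : ℝ} (hδ0 : 0 ≤ δ)
    (hB : ∀ i j, δ ≤ B i j) (h1 : ∀ i, ∑ j, B i j = 1)
    {x : Fin n → ℝ} {m M : ℝ} {j1 : Fin n} (hj1 : x j1 = M)
    (hmx : ∀ k, m ≤ x k) (i : Fin n) :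
    m + δ * (M - m) ≤ B.mulVec x i := by
  classical
  have h0 : ∀ i j, 0 ≤ B i j := fun i j => le_trans hδ0 (hB i j)
  have e1 : B.mulVec x i - m = ∑ k, B i k * (x k - m) := by
    simp only [Matrix.mulVec, dotProduct, mul_sub, Finset.sum_sub_distrib,
      ← Finset.sum_mul, h1 i, one_mul]
  have e2 : ∑ k, (if k = j1 then δ * (M - m) else 0) ≤ ∑ k, B i k * (x k - m) := by
    apply Finset.sum_le_sum
    intro k _
    by_cases hk : k = j1
    · subst hk
      rw [if_pos rfl, hj1]
      exact mul_le_mul (hB i k) le_rfl (by linarith [hj1 ▸ hmx k]) (h0 i k)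
    · rw [if_neg hk]
      exact mul_nonneg (h0 i k) (by linarith [hmx k])
  have e3 : ∑ k, (if k = j1 then δ * (M - m) else 0) = δ * (M - m) := by simp
  rw [e3] at e2
  linarith

lemma oscCP_mulVec (hne : (Finset.univ : Finset (Fin n)).Nonempty)
    {B : Matrix (Fin n) (Fin n) ℝ} {δ : ℝ} (hδ0 : 0 ≤ δ)
    (hB : ∀ i j, δ ≤ B i j) (h1 : ∀ i, ∑ j, B i j = 1) (x : Fin n → ℝ) :
    Finset.univ.sup' hne (B.mulVec x) - Finset.univ.inf' hne (B.mulVec x)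
      ≤ (1 - δ) * (Finset.univ.sup' hne x - Finset.univ.inf' hne x) := by
  classical
  obtain ⟨j0, -, hj0⟩ := Finset.exists_mem_eq_inf' hne x
  obtain ⟨j1, -, hj1⟩ := Finset.exists_mem_eq_sup' hne x
  have hxM : ∀ k, x k ≤ Finset.univ.sup' hne x := fun k => Finset.le_sup' x (Finset.mem_univ k)
  have hmx : ∀ k, Finset.univ.inf' hne x ≤ x k := fun k => Finset.inf'_le x (Finset.mem_univ k)
  have hmM : Finset.univ.inf' hne x ≤ Finset.univ.sup' hne x := le_trans (hmx j0) (hxM j0)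
  have h4 : Finset.univ.sup' hne (B.mulVec x)
      ≤ Finset.univ.sup' hne x - δ * (Finset.univ.sup' hne x - Finset.univ.inf' hne x) :=
    Finset.sup'_le hne _ fun i _ => oscCP_upper hδ0 hB h1 hj0.symm hxM i
  have h5 : Finset.univ.inf' hne x + δ * (Finset.univ.sup' hne x - Finset.univ.inf' hne x)
      ≤ Finset.univ.inf' hne (B.mulVec x) :=
    Finset.le_inf' hne _ fun i _ => oscCP_lower hδ0 hB h1 hj1.symm hmx i
  nlinarith [mul_nonneg hδ0 (by linarith : (0:ℝ) ≤ Finset.univ.sup' hne x - Finset.univ.inf' hne x)]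

end AuxCP

/-- For a strongly aperiodic sequence of row-stochastic matrices whose
transposes are of out-degree form, having the directed infinite flow property, every
backward product `A(t:s)` has rows that agree with a fixed vector `φ(s)` up to `Λ_{t,s}`,
and each factor `1 - 1/n^{ℓ_q}` lies in `(0,1)`. -/
theorem product_contraction_row_stochastic {n : ℕ} (hn : 2 ≤ n)
    (A : ℕ → Matrix (Fin n) (Fin n) ℝ)
    (hRS : ∀ t, RowStochastic (A t))
    (hOD : ∀ t, OutDegreeForm (A t).transpose)
    (hAper : StronglyAperiodic A)
    (hflow : DirectedInfiniteFlow A) :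
    (∀ q : ℕ, 1 ≤ q →
      (0:ℝ) < 1 - 1 / (n : ℝ) ^ (ellSeq A q) ∧ 1 - 1 / (n : ℝ) ^ (ellSeq A q) < 1) ∧
    ∀ s : ℕ, ∃ φ : Fin n → ℝ, ∀ t, s ≤ t → ∀ i j,
      |matProd A t s i j - φ j| ≤ Lam A t s := by
  classical
  have hn0 : 0 < n := by omega
  have hA0 : ∀ t i j, 0 ≤ A t i j := fun t => (hRS t).1
  have hA1 : ∀ t i, ∑ j, A t i j = 1 := fun t => (hRS t).2
  have hlb : ∀ t i j, A t i j ≠ 0 → (1 : ℝ) / n ≤ A t i j := entryCP_lb hn0 hOD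
  have hdiag : ∀ t i, 0 < A t i i := entryCP_diag_pos hn0 hOD
  have hkmono : StrictMono (kSeq A) := kSeqCP_strictMono hA0 hflow
  have hell : ∀ q, 1 ≤ q → 1 ≤ ellSeq A q := by
    intro q hq
    have h2 : (q - 1) * n + n = q * n := by
      have hq1 : q - 1 + 1 = q := by omega
      calc (q-1)*n + n = ((q-1)+1)*n := by ring
        _ = q*n := by rw [hq1]
    have h1 : (q - 1) * n < q * n := by omega
    have := hkmono h1
    unfold ellSeq
    omega
  have part1 : ∀ q : ℕ, 1 ≤ q →
      (0:ℝ) < 1 - 1 / (n : ℝ) ^ (ellSeq A q) ∧ 1 - 1 / (n : ℝ) ^ (ellSeq A q) < 1 := by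
    intro q hq
    have hn2 : (2:ℝ) ≤ (n:ℝ) := by exact_mod_cast hn
    have h1 : (1:ℝ) < (n : ℝ) ^ (ellSeq A q) := by
      calc (1:ℝ) < 2 := one_lt_two
        _ ≤ (n:ℝ) := hn2
        _ ≤ (n:ℝ) ^ (ellSeq A q) := le_self_pow₀ (by linarith) (by have := hell q hq; omega)
    constructor
    · have h3 : 1 / (n:ℝ) ^ (ellSeq A q) < 1 := by
        rw [div_lt_one (by linarith)]
        exact h1
      linarith
    · have h3 : 0 < 1 / (n:ℝ) ^ (ellSeq A q) := by positivity
      linarith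
  refine ⟨part1, fun s => ?_⟩
  have hne : (Finset.univ : Finset (Fin n)).Nonempty := ⟨⟨0, hn0⟩, Finset.mem_univ _⟩
  set Mx : ℕ → Fin n → ℝ := fun u j => Finset.univ.sup' hne fun i => blkCP A s u i j with hMxdef
  set mN : ℕ → Fin n → ℝ := fun u j => Finset.univ.inf' hne fun i => blkCP A s u i j with hmNdef
  have hb1 : ∀ a b i, ∑ j, blkCP A a b i j = 1 := fun a => blkCP_rowsum hA1 a
  have hentry_le : ∀ u i j, blkCP A s u i j ≤ Mx u j := fun u i j =>
    Finset.le_sup' (fun i => blkCP A s u i j) (Finset.mem_univ i)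
  have hentry_ge : ∀ u i j, mN u j ≤ blkCP A s u i j := fun u i j =>
    Finset.inf'_le (fun i => blkCP A s u i j) (Finset.mem_univ i)
  have hmM : ∀ u j, mN u j ≤ Mx u j := fun u j =>
    le_trans (hentry_ge u ⟨0, hn0⟩ j) (hentry_le u ⟨0, hn0⟩ j)
  have hstep : ∀ u, s ≤ u → ∀ j, mN u j ≤ mN (u+1) j ∧ Mx (u+1) j ≤ Mx u j := by
    intro u hu j
    have hcol : ∀ i, blkCP A s (u+1) i j = (A u).mulVec (fun i => blkCP A s u i j) i := by
      intro i
      rw [blkCP_succ A hu, Matrix.mul_apply]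
      simp [Matrix.mulVec, dotProduct]
    constructor
    · apply Finset.le_inf'
      intro i _
      rw [hcol i]
      exact mulVecCP_ge (hA0 u) (hA1 u) (fun k => hentry_ge u k j) i
    · apply Finset.sup'_le
      intro i _
      rw [hcol i]
      exact mulVecCP_le (hA0 u) (hA1 u) (fun k => hentry_le u k j) i
  have hmono : ∀ u v, s ≤ u → u ≤ v → ∀ j, mN u j ≤ mN v j ∧ Mx v j ≤ Mx u j := by
    intro u v hu huv
    induction v, huv using Nat.le_induction with
    | base => exact fun j => ⟨le_rfl, le_rfl⟩
    | succ v hv ih =>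
      intro j
      obtain ⟨h1, h2⟩ := ih j
      obtain ⟨h3, h4⟩ := hstep v (le_trans hu hv) j
      exact ⟨le_trans h1 h3, le_trans h4 h2⟩
  have hds : ∀ j, Mx s j = 1 ∧ mN s j = 0 := by
    intro j
    have hcol : ∀ i, blkCP A s s i j = if i = j then (1:ℝ) else 0 := by
      intro i
      rw [blkCP_of_le A le_rfl]
      exact Matrix.one_apply
    obtain ⟨i0, hi0⟩ : ∃ i0 : Fin n, i0 ≠ j := by
      have hcard : 1 < Fintype.card (Fin n) := by simp; omega
      exact Fintype.exists_ne_of_one_lt_card hcard j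
    constructor
    · apply le_antisymm
      · apply Finset.sup'_le
        intro i _
        rw [hcol i]
        split <;> norm_num
      · calc (1:ℝ) = blkCP A s s j j := by rw [hcol j, if_pos rfl]
          _ ≤ Mx s j := hentry_le s j j
    · apply le_antisymm
      · calc mN s j ≤ blkCP A s s i0 j := hentry_ge s i0 j
          _ = 0 := by rw [hcol i0, if_neg hi0]
      · apply Finset.le_inf'
        intro i _
        rw [hcol i]
        split <;> norm_num
  have hblock : ∀ q, 1 ≤ q → s ≤ kSeq A ((q-1)*n) → ∀ j,
      Mx (kSeq A (q*n)) j - mN (kSeq A (q*n)) j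
        ≤ (1 - 1 / (n:ℝ) ^ (ellSeq A q)) *
          (Mx (kSeq A ((q-1)*n)) j - mN (kSeq A ((q-1)*n)) j) := by
    intro q hq hs j
    have hab : kSeq A ((q-1)*n) ≤ kSeq A (q*n) :=
      hkmono.monotone (mul_le_mul_left (by omega : q - 1 ≤ q) n)
    have hrn : (q-1)*n + n = q*n := by
      have hq1 : q - 1 + 1 = q := by omega
      calc (q-1)*n + n = ((q-1)+1)*n := by ring
        _ = q*n := by rw [hq1]
    have hBpos : ∀ i k, 0 < blkCP A (kSeq A ((q-1)*n)) (kSeq A (q*n)) i k := by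
      intro i k
      have h := blockCP_all_pos hA0 hflow hdiag ((q-1)*n) i k
      rwa [hrn] at h
    have hδ : ∀ i k, ((1:ℝ)/n) ^ (ellSeq A q)
        ≤ blkCP A (kSeq A ((q-1)*n)) (kSeq A (q*n)) i k := by
      intro i k
      have h := blkCP_entry_lb hA0 hlb (kSeq A ((q-1)*n)) (kSeq A (q*n)) i k (hBpos i k)
      have he : kSeq A (q*n) - kSeq A ((q-1)*n) = ellSeq A q := rfl
      rwa [he] at h
    have hcol : ∀ i, blkCP A s (kSeq A (q*n)) i j
        = (blkCP A (kSeq A ((q-1)*n)) (kSeq A (q*n))).mulVec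
            (fun i => blkCP A s (kSeq A ((q-1)*n)) i j) i := by
      intro i
      rw [blkCP_mul A hs hab, Matrix.mul_apply]
      simp [Matrix.mulVec, dotProduct]
    have hoscq := oscCP_mulVec hne (δ := ((1:ℝ)/n) ^ (ellSeq A q)) (by positivity) hδ
      (hb1 _ _) (fun i => blkCP A s (kSeq A ((q-1)*n)) i j)
    have hrw : (fun i => blkCP A s (kSeq A (q*n)) i j)
        = (blkCP A (kSeq A ((q-1)*n)) (kSeq A (q*n))).mulVec
            (fun i => blkCP A s (kSeq A ((q-1)*n)) i j) := funext hcol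
    have hpow : ((1:ℝ)/n) ^ (ellSeq A q) = 1 / (n:ℝ) ^ (ellSeq A q) := one_div_pow _ _
    have h5 : Mx (kSeq A (q*n)) j - mN (kSeq A (q*n)) j
        ≤ (1 - ((1:ℝ)/n) ^ (ellSeq A q)) *
          (Mx (kSeq A ((q-1)*n)) j - mN (kSeq A ((q-1)*n)) j) := by
      simp only [hMxdef, hmNdef]
      rw [hrw]
      exact hoscq
    rwa [hpow] at h5
  have hg0 : ∀ q, 1 ≤ q → 0 ≤ 1 - 1/(n:ℝ)^(ellSeq A q) := fun q hq => le_of_lt (part1 q hq).1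
  have htel : ∀ a b, 1 ≤ a → a ≤ b →
      (∀ q, a ≤ q → q ≤ b → s ≤ kSeq A ((q-1)*n)) →
      ∀ j, Mx (kSeq A (b*n)) j - mN (kSeq A (b*n)) j
        ≤ (∏ q ∈ Finset.Icc a b, (1 - 1/(n:ℝ)^(ellSeq A q))) *
          (Mx (kSeq A ((a-1)*n)) j - mN (kSeq A ((a-1)*n)) j) := by
    intro a b ha1 hab
    induction b, hab using Nat.le_induction with
    | base =>
      intro hcond j
      rw [Finset.Icc_self, Finset.prod_singleton]
      exact hblock a ha1 (hcond a le_rfl le_rfl) j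
    | succ b hb ih =>
      intro hcond j
      have h1 := hblock (b+1) (by omega) (by
        have h := hcond (b+1) (by omega) le_rfl
        simpa using h) j
      have h2 := ih (fun q hq hq' => hcond q hq (by omega)) j
      have hsimp : (b + 1 - 1) * n = b * n := by simp
      rw [hsimp] at h1
      have hgnn : 0 ≤ 1 - 1/(n:ℝ)^(ellSeq A (b+1)) := hg0 (b+1) (by omega)
      calc Mx (kSeq A ((b+1)*n)) j - mN (kSeq A ((b+1)*n)) j
          ≤ (1 - 1/(n:ℝ)^(ellSeq A (b+1))) *
            (Mx (kSeq A (b*n)) j - mN (kSeq A (b*n)) j) := h1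
        _ ≤ (1 - 1/(n:ℝ)^(ellSeq A (b+1))) *
            ((∏ q ∈ Finset.Icc a b, (1 - 1/(n:ℝ)^(ellSeq A q))) *
              (Mx (kSeq A ((a-1)*n)) j - mN (kSeq A ((a-1)*n)) j)) :=
            mul_le_mul_of_nonneg_left h2 hgnn
        _ = _ := by
            rw [Finset.prod_Icc_succ_top (by omega : a ≤ b + 1)]
            ring
  have hoscLam : ∀ t, s ≤ t → ∀ j, Mx (t+1) j - mN (t+1) j ≤ Lam A t s := by
    intro t ht j
    by_cases hQ : (QSet A t s).Nonempty
    · have hmemQ : ∀ q ∈ QSet A t s,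
          (1 ≤ q ∧ q ≤ t) ∧ s ≤ kSeq A ((q-1)*n) ∧ kSeq A (q*n) ≤ t := by
        intro q hq
        simp only [QSet, Finset.mem_filter, Finset.mem_Icc] at hq
        tauto
      have hq1 := hmemQ _ ((QSet A t s).min'_mem hQ)
      have hq2 := hmemQ _ ((QSet A t s).max'_mem hQ)
      have hq12 : (QSet A t s).min' hQ ≤ (QSet A t s).max' hQ :=
        Finset.min'_le _ _ ((QSet A t s).max'_mem hQ)
      have hQeq : QSet A t s = Finset.Icc ((QSet A t s).min' hQ) ((QSet A t s).max' hQ) := by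
        apply Finset.Subset.antisymm
        · intro q hq
          rw [Finset.mem_Icc]
          exact ⟨Finset.min'_le _ _ hq, Finset.le_max' _ _ hq⟩
        · intro q hq
          rw [Finset.mem_Icc] at hq
          simp only [QSet, Finset.mem_filter, Finset.mem_Icc]
          refine ⟨⟨le_trans hq1.1.1 hq.1, le_trans hq.2 hq2.1.2⟩, ?_, ?_⟩
          · exact le_trans hq1.2.1
              (hkmono.monotone (mul_le_mul_left (by omega : _ - 1 ≤ q - 1) n))
          · exact le_trans (hkmono.monotone (mul_le_mul_left hq.2 n)) hq2.2.2
      have htel' := htel ((QSet A t s).min' hQ) ((QSet A t s).max' hQ) hq1.1.1 hq12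
        (fun q hq hq' => (hmemQ q (by rw [hQeq]; exact Finset.mem_Icc.mpr ⟨hq, hq'⟩)).2.1) j
      have hstep1 : Mx (t+1) j - mN (t+1) j
          ≤ Mx (kSeq A ((QSet A t s).max' hQ * n)) j
            - mN (kSeq A ((QSet A t s).max' hQ * n)) j := by
        have hs2 : s ≤ kSeq A ((QSet A t s).max' hQ * n) :=
          le_trans hq2.2.1
            (hkmono.monotone (mul_le_mul_left (by omega : _ - 1 ≤ _) n))
        have h := hmono (kSeq A ((QSet A t s).max' hQ * n)) (t+1) hs2
          (by have := hq2.2.2; omega) j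
        linarith [h.1, h.2]
      have hbase : Mx (kSeq A (((QSet A t s).min' hQ - 1)*n)) j
          - mN (kSeq A (((QSet A t s).min' hQ - 1)*n)) j ≤ 1 := by
        have h := hmono s (kSeq A (((QSet A t s).min' hQ - 1)*n)) le_rfl hq1.2.1 j
        obtain ⟨hds1, hds2⟩ := hds j
        linarith [h.1, h.2]
      have hprodnn : 0 ≤ ∏ q ∈ Finset.Icc ((QSet A t s).min' hQ) ((QSet A t s).max' hQ),
          (1 - 1/(n:ℝ)^(ellSeq A q)) :=
        Finset.prod_nonneg fun q hq => hg0 q (le_trans hq1.1.1 (Finset.mem_Icc.mp hq).1)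
      have hLam : Lam A t s = ∏ q ∈ Finset.Icc ((QSet A t s).min' hQ) ((QSet A t s).max' hQ),
          (1 - 1/(n:ℝ)^(ellSeq A q)) := by
        unfold Lam
        rw [← hQeq]
      rw [hLam]
      calc Mx (t+1) j - mN (t+1) j
          ≤ Mx (kSeq A ((QSet A t s).max' hQ * n)) j
            - mN (kSeq A ((QSet A t s).max' hQ * n)) j := hstep1
        _ ≤ (∏ q ∈ Finset.Icc ((QSet A t s).min' hQ) ((QSet A t s).max' hQ),
              (1 - 1/(n:ℝ)^(ellSeq A q))) *
            (Mx (kSeq A (((QSet A t s).min' hQ - 1)*n)) j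
              - mN (kSeq A (((QSet A t s).min' hQ - 1)*n)) j) := htel'
        _ ≤ (∏ q ∈ Finset.Icc ((QSet A t s).min' hQ) ((QSet A t s).max' hQ),
              (1 - 1/(n:ℝ)^(ellSeq A q))) * 1 :=
            mul_le_mul_of_nonneg_left hbase hprodnn
        _ = _ := mul_one _
    · have hLam : Lam A t s = 1 := by
        unfold Lam
        rw [Finset.not_nonempty_iff_eq_empty.mp hQ, Finset.prod_empty]
      have h := hmono s (t+1) le_rfl (by omega) j
      obtain ⟨hds1, hds2⟩ := hds j
      rw [hLam]
      linarith [h.1, h.2]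
  refine ⟨fun j => ⨆ u : ℕ, mN (s+u) j, ?_⟩
  intro t ht i j
  have hub : matProd A t s i j ≤ Mx (t+1) j := by
    rw [matProd_eq_blkCP]
    exact hentry_le (t+1) i j
  have hlbe : mN (t+1) j ≤ matProd A t s i j := by
    rw [matProd_eq_blkCP]
    exact hentry_ge (t+1) i j
  have hbdd : BddAbove (Set.range fun u : ℕ => mN (s+u) j) := by
    refine ⟨Mx s j, ?_⟩
    rintro y ⟨u, rfl⟩
    exact le_trans (hmM (s+u) j) (hmono s (s+u) le_rfl (by omega) j).2
  have hφub : (⨆ u : ℕ, mN (s+u) j) ≤ Mx (t+1) j := by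
    apply ciSup_le
    intro u
    rcases le_or_gt (s+u) (t+1) with h | h
    · exact le_trans (hmono (s+u) (t+1) (by omega) h j).1 (hmM (t+1) j)
    · exact le_trans (hmM (s+u) j) (hmono (t+1) (s+u) (by omega) (by omega) j).2
  have hφlb : mN (t+1) j ≤ ⨆ u : ℕ, mN (s+u) j := by
    have h := le_ciSup hbdd (t+1-s)
    have he : s + (t+1-s) = t+1 := by omega
    rwa [he] at h
  have habs : |matProd A t s i j - ⨆ u : ℕ, mN (s+u) j| ≤ Mx (t+1) j - mN (t+1) j := by
    rw [abs_le]
    constructor <;> linarith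
  exact le_trans habs (hoscLam t ht j)
end

section
/- Let n ≥ 2 and let {A(t)}_{t≥0} be a sequence of row-stochastic n×n matrices such that each transpose A'(t) is of out-degree form, and suppose {A(t)} is strongly aperiodic and has the directed infinite flow property. If the associated sequence {ℓ_q} satisfies Σ_{q=1}^∞ 1/n^{ℓ_q} = ∞, then {A(t)} is ergodic: for every s ≥ 0 there exists a stochastic vector v(s) ∈ ℝⁿ such that lim_{t→∞} [A(t:s)]_{ij} = v_j(s) for all i, j ∈ [n]. -/
/-!
Let `F(t) = A(t-1) ⋯ A(s)`. Each column of `F(t)` is pushed forward by a row-stochastic matrix,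
so its minimum increases and its maximum decreases; it suffices to show that their gap, the
spread, tends to `0`. Positive diagonals make the support of a column of a product grow
monotonically, and positive flow across every cut during `[k_q, k_{q+1})` adds a new row to it;
hence the product over `[k_{(q-1)n}, k_{qn})` is entrywise positive, and since positive entries
of every `A(t)` are at least `1/n`, its entries are at least `1/n^{ℓ_q}`. A stochastic matrix
with a column bounded below by `β` contracts the spread by `1 - β`, and
`∏ (1 - 1/n^{ℓ_q}) = 0` because `∑ 1/n^{ℓ_q} = ∞`.
-/

open Finset MeasureTheory

open Filter Topology Matrix

section ForwardProduct

variable {ι R : Type*} [Fintype ι] [DecidableEq ι] [Semiring R]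

/-- `prodIco A a b = A (b - 1) * ⋯ * A a`, the identity when `b ≤ a`. -/
def prodIco (A : ℕ → Matrix ι ι R) (a b : ℕ) : Matrix ι ι R :=
  ((List.range (b - a)).map fun k => A (b - 1 - k)).prod

variable (A : ℕ → Matrix ι ι R) {a b c : ℕ}

lemma prodIco_of_le (h : b ≤ a) : prodIco A a b = 1 := by
  simp [prodIco, Nat.sub_eq_zero_of_le h]

lemma prodIco_succ (h : a ≤ b) : prodIco A a (b + 1) = A b * prodIco A a b := by
  rw [prodIco, Nat.sub_add_comm h, List.range_succ_eq_map]
  simp only [List.map_cons, List.map_map, List.prod_cons, Nat.add_sub_cancel, Nat.sub_zero]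
  congr 3
  funext k
  simp only [Function.comp_apply]
  congr 1
  omega

lemma prodIco_trans (hab : a ≤ b) (hbc : b ≤ c) :
    prodIco A a c = prodIco A b c * prodIco A a b := by
  induction c, hbc using Nat.le_induction with
  | base => rw [prodIco_of_le A le_rfl, one_mul]
  | succ c hbc ih =>
    rw [prodIco_succ A (hab.trans hbc), prodIco_succ A hbc, ih, Matrix.mul_assoc]

end ForwardProduct

lemma matProd_eq_prodIco {n : ℕ} (A : ℕ → Matrix (Fin n) (Fin n) ℝ) (t s : ℕ) :
    matProd A t s = prodIco A s (t + 1) := by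
  simp [matProd, prodIco]

lemma prodIco_mem_rowStochastic {ι : Type*} [Fintype ι] [DecidableEq ι]
    {A : ℕ → Matrix ι ι ℝ} (hA : ∀ t, A t ∈ rowStochastic ℝ ι) (a b : ℕ) :
    prodIco A a b ∈ rowStochastic ℝ ι :=
  Submonoid.list_prod_mem _ (by simp [hA])

namespace OutDegreeForm

variable {n : ℕ} {W : Matrix (Fin n) (Fin n) ℝ} (hW : OutDegreeForm W)
include hW

lemma diag_pos (i : Fin n) : 0 < W i i := by
  obtain ⟨N, hself, hW⟩ := hW
  rw [hW, if_pos (hself i)]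
  exact one_div_pos.2 (Nat.cast_pos.2 (card_pos.2 ⟨i, hself i⟩))

lemma one_div_le_of_pos {i j : Fin n} (hij : 0 < W i j) : 1 / (n : ℝ) ≤ W i j := by
  obtain ⟨N, hself, hW⟩ := hW
  rw [hW] at hij ⊢
  split_ifs at hij ⊢ with hi
  · have hcard : 0 < (N j).card := card_pos.2 ⟨j, hself j⟩
    gcongr
    simpa using card_le_univ (N j)
  · exact absurd hij (lt_irrefl 0)

end OutDegreeForm

section Positivity

variable {ι : Type*}

lemma one_le_one_apply_of_pos [DecidableEq ι] {i j : ι} (h : 0 < (1 : Matrix ι ι ℝ) i j) :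
    1 ≤ (1 : Matrix ι ι ℝ) i j := by
  obtain rfl : i = j := by_contra fun hij => by simp [one_apply_ne hij] at h
  simp

variable [Fintype ι]

lemma mul_le_mul_apply {P Q : Matrix ι ι ℝ} (hP : ∀ i j, 0 ≤ P i j)
    (hQ : ∀ i j, 0 ≤ Q i j) (i k j : ι) : P i k * Q k j ≤ (P * Q) i j :=
  single_le_sum (f := fun l => P i l * Q l j)
    (fun l _ => mul_nonneg (hP i l) (hQ l j)) (mem_univ k)

lemma exists_pos_of_mul_apply_pos {P Q : Matrix ι ι ℝ} (hP : ∀ i j, 0 ≤ P i j)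
    (hQ : ∀ i j, 0 ≤ Q i j) {i j : ι} (h : 0 < (P * Q) i j) :
    ∃ k, 0 < P i k ∧ 0 < Q k j := by
  have h' : ∑ _ : ι, (0 : ℝ) < ∑ l, P i l * Q l j := by simpa [mul_apply] using h
  obtain ⟨k, -, hk⟩ := exists_lt_of_sum_lt h'
  exact ⟨k, pos_of_mul_pos_left hk (hQ k j), pos_of_mul_pos_right hk (hP i k)⟩

variable [DecidableEq ι] {A : ℕ → Matrix ι ι ℝ} (hA : ∀ t, A t ∈ rowStochastic ℝ ι)
  {a b c : ℕ} {i j k : ι}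
include hA

lemma prodIco_succ_pos (hab : a ≤ b) (hAik : 0 < A b i k) (hP : 0 < prodIco A a b k j) :
    0 < prodIco A a (b + 1) i j := by
  rw [prodIco_succ A hab]
  exact (mul_pos hAik hP).trans_le <| mul_le_mul_apply (P := A b) (Q := prodIco A a b)
    (fun _ _ => nonneg_of_mem_rowStochastic (hA b))
    (fun _ _ => nonneg_of_mem_rowStochastic (prodIco_mem_rowStochastic hA a b)) i k j

lemma prodIco_pos_mono (hdiag : ∀ t i, 0 < A t i i) (hbc : b ≤ c)
    (h : 0 < prodIco A a b i j) : 0 < prodIco A a c i j := by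
  induction c, hbc using Nat.le_induction with
  | base => exact h
  | succ c _ ih =>
    rcases le_or_gt a c with hac | hca
    · exact prodIco_succ_pos hA hac (hdiag c i) ih
    · rwa [prodIco_of_le A hca, ← prodIco_of_le A hca.le]

lemma prodIco_diag_pos (hdiag : ∀ t i, 0 < A t i i) (a b : ℕ) (j : ι) :
    0 < prodIco A a b j j := by
  rcases le_total b a with hba | hab
  · simp [prodIco_of_le A hba]
  · exact prodIco_pos_mono hA hdiag hab (by simp [prodIco_of_le A le_rfl])

lemma pow_le_prodIco_of_pos {δ : ℝ} (hδ : 0 ≤ δ)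
    (hδA : ∀ t i j, 0 < A t i j → δ ≤ A t i j) (h : 0 < prodIco A a b i j) :
    δ ^ (b - a) ≤ prodIco A a b i j := by
  induction b generalizing i with
  | zero =>
    rw [prodIco_of_le A (Nat.zero_le a)] at h ⊢
    simpa using one_le_one_apply_of_pos h
  | succ b ih =>
    rcases le_or_gt a b with hab | hba
    · have hA0 : ∀ i j, 0 ≤ A b i j := fun _ _ => nonneg_of_mem_rowStochastic (hA b)
      have hP0 : ∀ i j, 0 ≤ prodIco A a b i j :=
        fun _ _ => nonneg_of_mem_rowStochastic (prodIco_mem_rowStochastic hA a b)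
      rw [prodIco_succ A hab] at h ⊢
      obtain ⟨k, hAik, hPkj⟩ := exists_pos_of_mul_apply_pos hA0 hP0 h
      calc δ ^ (b + 1 - a) = δ * δ ^ (b - a) := by rw [Nat.sub_add_comm hab, pow_succ']
        _ ≤ A b i k * prodIco A a b k j :=
          mul_le_mul (hδA b i k hAik) (ih hPkj) (pow_nonneg hδ _) (hA0 i k)
        _ ≤ _ := mul_le_mul_apply hA0 hP0 i k j
    · rw [prodIco_of_le A hba] at h ⊢
      simpa [Nat.sub_eq_zero_of_le hba] using one_le_one_apply_of_pos h

end Positivity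

lemma exists_pos_of_sum_pos {α : Type*} {s : Finset α} {f : α → ℝ}
    (h : 0 < ∑ i ∈ s, f i) : ∃ i ∈ s, 0 < f i :=
  exists_lt_of_sum_lt (f := 0) (by simpa using h)

lemma eq_univ_of_monotone_of_ne_succ {α : Type*} [Fintype α] [DecidableEq α]
    {S : ℕ → Finset α} (hS : Monotone S) (hgrow : ∀ r, S r ≠ univ → S r ≠ S (r + 1)) :
    S (Fintype.card α) = univ := by
  have hcard : ∀ r, min (Fintype.card α) r ≤ (S r).card := by
    intro r
    induction r with
    | zero => simp
    | succ r ih =>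
      by_cases hr : S r = univ
      · have : S (r + 1) = univ :=
          eq_univ_of_forall fun x => hS (Nat.le_add_right r 1) (hr ▸ mem_univ x)
        simp [this]
      · have := card_lt_card ((hS (Nat.le_add_right r 1)).lt_of_ne (hgrow r hr))
        omega
  have := hcard (Fintype.card α)
  rw [min_self] at this
  exact eq_univ_of_card _ ((card_le_univ _).antisymm this)

section Flow

variable {n : ℕ} {A : ℕ → Matrix (Fin n) (Fin n) ℝ}

lemma exists_flow_pos_Ico (hflow : DirectedInfiniteFlow A) (k : ℕ) :
    ∃ T, k < T ∧ ∀ S, NontrivialSubset S → 0 < ∑ t ∈ Ico k T, flowSum (A t) S := by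
  have hev : ∀ᶠ T in atTop, ∀ S : {S : Finset (Fin n) // NontrivialSubset S},
      ∑ t ∈ range k, flowSum (A t) S < ∑ t ∈ range T, flowSum (A t) S :=
    eventually_all.2 fun S => (hflow S.1 S.2).eventually_gt_atTop _
  obtain ⟨T, hkT, hT⟩ := ((eventually_gt_atTop k).and hev).exists
  exact ⟨T, hkT, fun S hS => by rw [sum_Ico_eq_sub _ hkT.le]; linarith [hT ⟨S, hS⟩]⟩

lemma kSeq_succ_spec (hflow : DirectedInfiniteFlow A) (q : ℕ) :
    kSeq A q < kSeq A (q + 1) ∧ ∀ S, NontrivialSubset S →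
      0 < ∑ t ∈ Ico (kSeq A q) (kSeq A (q + 1)), flowSum (A t) S :=
  Nat.sInf_mem (exists_flow_pos_Ico hflow (kSeq A q))

lemma kSeq_strictMono (hflow : DirectedInfiniteFlow A) : StrictMono (kSeq A) :=
  strictMono_nat_of_lt_succ fun q => (kSeq_succ_spec hflow q).1

variable (hA : ∀ t, A t ∈ rowStochastic ℝ (Fin n)) (hdiag : ∀ t i, 0 < A t i i)
include hA hdiag

lemma exists_new_pos_of_flow {a b c : ℕ} (hab : a ≤ b)
    (hflow : ∀ S, NontrivialSubset S → 0 < ∑ t ∈ Ico b c, flowSum (A t) S) {j : Fin n}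
    (hne : ∃ i, ¬ 0 < prodIco A a b i j) :
    ∃ i, ¬ 0 < prodIco A a b i j ∧ 0 < prodIco A a c i j := by
  set S := univ.filter fun i => ¬ 0 < prodIco A a b i j
  have hSnt : NontrivialSubset S := by
    refine ⟨by simpa [S, filter_nonempty_iff] using hne, fun hSu => ?_⟩
    have : j ∈ S := hSu ▸ mem_univ j
    simp only [S, mem_filter, mem_univ, true_and] at this
    exact this (prodIco_diag_pos hA hdiag a b j)
  -- flow out of the unreached rows `S` means that at some time `t ∈ [b, c)` a row `i ∈ S`
  -- puts weight on a row `k` already reached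
  obtain ⟨t, ht, htpos⟩ := exists_pos_of_sum_pos (hflow S hSnt)
  obtain ⟨i, hi, hipos⟩ := exists_pos_of_sum_pos htpos
  obtain ⟨k, hk, hAik⟩ := exists_pos_of_sum_pos hipos
  rw [mem_Ico] at ht
  simp only [S, mem_compl, mem_filter, mem_univ, true_and, not_not] at hi hk
  refine ⟨i, hi, prodIco_pos_mono hA hdiag ht.2 (prodIco_succ_pos hA (hab.trans ht.1) hAik ?_)⟩
  exact prodIco_pos_mono hA hdiag ht.1 hk

lemma prodIco_kSeq_add_pos (hflow : DirectedInfiniteFlow A) (m : ℕ) (i j : Fin n) :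
    0 < prodIco A (kSeq A m) (kSeq A (m + n)) i j := by
  set S : ℕ → Finset (Fin n) :=
    fun r => univ.filter fun i => 0 < prodIco A (kSeq A m) (kSeq A (m + r)) i j
  have hmono : Monotone S := monotone_nat_of_le_succ fun r i hi => by
    simp only [S, mem_filter, mem_univ, true_and] at hi ⊢
    exact prodIco_pos_mono hA hdiag ((kSeq_strictMono hflow).monotone (by omega)) hi
  have hgrow : ∀ r, S r ≠ univ → S r ≠ S (r + 1) := by
    intro r hr heq
    obtain ⟨i, hi, hi'⟩ := exists_new_pos_of_flow hA hdiag
      ((kSeq_strictMono hflow).monotone (Nat.le_add_right m r)) (kSeq_succ_spec hflow (m + r)).2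
      (by simpa [S, eq_univ_iff_forall] using hr)
    have : i ∈ S r := heq ▸ by simpa [S, ← add_assoc] using hi'
    exact hi (by simpa [S] using this)
  simpa [S] using eq_univ_iff_forall.1 (eq_univ_of_monotone_of_ne_succ hmono hgrow) i

lemma one_div_pow_ellSeq_le_prodIco (hδ : ∀ t i j, 0 < A t i j → 1 / (n : ℝ) ≤ A t i j)
    (hflow : DirectedInfiniteFlow A) (q : ℕ) (i j : Fin n) :
    1 / (n : ℝ) ^ ellSeq A (q + 1) ≤ prodIco A (kSeq A (q * n)) (kSeq A ((q + 1) * n)) i j := by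
  rw [← _root_.one_div_pow, ellSeq, Nat.add_sub_cancel, add_one_mul]
  exact pow_le_prodIco_of_pos hA (by positivity) hδ (prodIco_kSeq_add_pos hA hdiag hflow _ i j)

end Flow

noncomputable def spread {ι : Type*} (x : ι → ℝ) : ℝ := (⨆ i, x i) - ⨅ i, x i

section Spread

variable {ι : Type*} [Fintype ι] [DecidableEq ι] {P : Matrix ι ι ℝ}
  (hP : P ∈ rowStochastic ℝ ι) {x : ι → ℝ}
include hP

lemma mulVec_le_sub_mul {M : ℝ} (hx : ∀ j, x j ≤ M) (i j₀ : ι) :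
    (P *ᵥ x) i ≤ M - P i j₀ * (M - x j₀) := by
  have hgap : M - (P *ᵥ x) i = ∑ j, P i j * (M - x j) := by
    simp only [mulVec, dotProduct, mul_sub, sum_sub_distrib, ← sum_mul,
      sum_row_of_mem_rowStochastic hP i, one_mul]
  have := single_le_sum (f := fun j => P i j * (M - x j))
    (fun j _ => mul_nonneg (nonneg_of_mem_rowStochastic hP) (sub_nonneg.2 (hx j)))
    (mem_univ j₀)
  linarith

lemma add_mul_le_mulVec {m : ℝ} (hx : ∀ j, m ≤ x j) (i j₀ : ι) :
    m + P i j₀ * (x j₀ - m) ≤ (P *ᵥ x) i := by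
  have := mulVec_le_sub_mul hP (x := -x) (M := -m) (fun j => neg_le_neg (hx j)) i j₀
  simp only [mulVec_neg, Pi.neg_apply] at this
  linarith

variable [Nonempty ι]

lemma iInf_le_iInf_mulVec : ⨅ i, x i ≤ ⨅ i, (P *ᵥ x) i :=
  le_ciInf fun i =>
    le_trans (le_add_of_nonneg_right (mul_nonneg (nonneg_of_mem_rowStochastic hP)
      (sub_nonneg.2 (ciInf_le (Finite.bddBelow_range x) i))))
      (add_mul_le_mulVec hP (fun j => ciInf_le (Finite.bddBelow_range x) j) i i)

lemma iSup_mulVec_le_iSup : ⨆ i, (P *ᵥ x) i ≤ ⨆ i, x i :=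
  ciSup_le fun i =>
    le_trans (mulVec_le_sub_mul hP (fun j => le_ciSup (Finite.bddAbove_range x) j) i i)
      (sub_le_self _ (mul_nonneg (nonneg_of_mem_rowStochastic hP)
        (sub_nonneg.2 (le_ciSup (Finite.bddAbove_range x) i))))

lemma spread_mulVec_le {α : ℝ} {j₀ : ι} (hα : ∀ i, α ≤ P i j₀) :
    spread (P *ᵥ x) ≤ (1 - α) * spread x := by
  obtain ⟨i, hi⟩ := exists_eq_ciSup_of_finite (f := P *ᵥ x)
  obtain ⟨k, hk⟩ := exists_eq_ciInf_of_finite (f := P *ᵥ x)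
  have hM : ∀ j, x j ≤ ⨆ j, x j := le_ciSup (Finite.bddAbove_range x)
  have hm : ∀ j, ⨅ j, x j ≤ x j := ciInf_le (Finite.bddBelow_range x)
  have hup := mulVec_le_sub_mul hP hM i j₀
  have hlow := add_mul_le_mulVec hP hm k j₀
  have hαi := mul_le_mul_of_nonneg_right (hα i) (sub_nonneg.2 (hM j₀))
  have hαk := mul_le_mul_of_nonneg_right (hα k) (sub_nonneg.2 (hm j₀))
  rw [spread, spread, ← hi, ← hk]
  linarith

end Spread

lemma spread_nonneg {ι : Type*} [Finite ι] [Nonempty ι] (x : ι → ℝ) :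
    0 ≤ spread x := by
  obtain ⟨i⟩ := ‹Nonempty ι›
  exact sub_nonneg.2 ((ciInf_le (Finite.bddBelow_range x) i).trans
    (le_ciSup (Finite.bddAbove_range x) i))

lemma exists_tendsto_of_tendsto_spread {ι : Type*} [Finite ι] [Nonempty ι]
    {x : ℕ → ι → ℝ} (hinf : Monotone fun t => ⨅ i, x t i)
    (hsup : Antitone fun t => ⨆ i, x t i)
    {φ : ℕ → ℕ} (hφ : Tendsto φ atTop atTop)
    (hspread : Tendsto (fun q => spread (x (φ q))) atTop (𝓝 0)) :
    ∃ c, ∀ i, Tendsto (fun t => x t i) atTop (𝓝 c) := by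
  have hlow : ∀ t i, ⨅ i, x t i ≤ x t i := fun t => ciInf_le (Finite.bddBelow_range _)
  have hup : ∀ t i, x t i ≤ ⨆ i, x t i := fun t => le_ciSup (Finite.bddAbove_range _)
  obtain ⟨i₀⟩ := ‹Nonempty ι›
  have hinf_lim := tendsto_atTop_ciSup hinf ⟨⨆ i, x 0 i, by
    rintro _ ⟨t, rfl⟩; exact (hlow t i₀).trans ((hup t i₀).trans (hsup (Nat.zero_le t)))⟩
  have hsup_lim := tendsto_atTop_ciInf hsup ⟨⨅ i, x 0 i, by
    rintro _ ⟨t, rfl⟩; exact (hinf (Nat.zero_le t)).trans ((hlow t i₀).trans (hup t i₀))⟩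
  have hlim_eq := tendsto_nhds_unique ((hsup_lim.comp hφ).sub (hinf_lim.comp hφ)) hspread
  rw [sub_eq_zero] at hlim_eq
  exact ⟨_, fun i => tendsto_of_tendsto_of_tendsto_of_le_of_le hinf_lim (hlim_eq ▸ hsup_lim)
    (fun t => hlow t i) (fun t => hup t i)⟩

lemma tendsto_prod_one_sub_of_tendsto_sum {α ι : Type*} {l : Filter α} {I : α → Finset ι}
    {β : ι → ℝ} (hβ : ∀ i, β i ≤ 1)
    (h : Tendsto (fun a => ∑ i ∈ I a, β i) l atTop) :
    Tendsto (fun a => ∏ i ∈ I a, (1 - β i)) l (𝓝 0) := by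
  refine tendsto_of_tendsto_of_tendsto_of_le_of_le tendsto_const_nhds
    (Real.tendsto_exp_atBot.comp (tendsto_neg_atTop_atBot.comp h))
    (fun a => prod_nonneg fun i _ => sub_nonneg.2 (hβ i)) fun a => ?_
  calc ∏ i ∈ I a, (1 - β i) ≤ ∏ i ∈ I a, Real.exp (-β i) :=
        prod_le_prod (fun i _ => sub_nonneg.2 (hβ i)) fun i _ => Real.one_sub_le_exp_neg _
    _ = Real.exp (-∑ i ∈ I a, β i) := by rw [← Real.exp_sum, sum_neg_distrib]

section Ergodic

variable {n : ℕ} {A : ℕ → Matrix (Fin n) (Fin n) ℝ}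
  (hA : ∀ t, A t ∈ rowStochastic ℝ (Fin n)) (hdiag : ∀ t i, 0 < A t i i)
  (hδ : ∀ t i j, 0 < A t i j → 1 / (n : ℝ) ≤ A t i j)
  (hflow : DirectedInfiniteFlow A) (hn : 0 < n)
include hA hdiag hδ hflow hn

lemma spread_prodIco_kSeq_le (s : ℕ) (j : Fin n) {Q : ℕ} (hQ : s ≤ Q) :
    spread (fun i => prodIco A s (kSeq A (Q * n)) i j) ≤
      (∏ q ∈ Ioc s Q, (1 - 1 / (n : ℝ) ^ ellSeq A q)) *
        spread (fun i => prodIco A s (kSeq A (s * n)) i j) := by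
  have : Nonempty (Fin n) := ⟨⟨0, hn⟩⟩
  induction Q, hQ using Nat.le_induction with
  | base => simp
  | succ Q hsQ ih =>
    set a := kSeq A (Q * n)
    set b := kSeq A ((Q + 1) * n)
    have hsa : s ≤ a := (Nat.le_mul_of_pos_right s hn).trans
      ((Nat.mul_le_mul_right n hsQ).trans (kSeq_strictMono hflow).le_apply)
    have hab : a ≤ b := (kSeq_strictMono hflow).monotone (Nat.mul_le_mul_right n Q.le_succ)
    have hβ : 1 / (n : ℝ) ^ ellSeq A (Q + 1) ≤ 1 :=
      div_le_one_of_le₀ (one_le_pow₀ (by exact_mod_cast hn)) (by positivity)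
    calc spread (fun i => prodIco A s b i j)
        = spread (prodIco A a b *ᵥ fun i => prodIco A s a i j) := by
          rw [prodIco_trans A hsa hab]; rfl
      _ ≤ (1 - 1 / (n : ℝ) ^ ellSeq A (Q + 1)) * spread (fun i => prodIco A s a i j) :=
          spread_mulVec_le (prodIco_mem_rowStochastic hA a b) (j₀ := j)
            fun i => one_div_pow_ellSeq_le_prodIco hA hdiag hδ hflow Q i j
      _ ≤ _ := by
          rw [prod_Ioc_succ_top hsQ, mul_comm _ (1 - _), mul_assoc]
          exact mul_le_mul_of_nonneg_left ih (sub_nonneg.2 hβ)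

lemma tendsto_spread_prodIco_kSeq
    (hsum : Tendsto (fun Q => ∑ q ∈ Icc 1 Q, 1 / (n : ℝ) ^ ellSeq A q) atTop atTop)
    (s : ℕ) (j : Fin n) :
    Tendsto (fun Q => spread (fun i => prodIco A s (kSeq A (Q * n)) i j)) atTop (𝓝 0) := by
  have : Nonempty (Fin n) := ⟨⟨0, hn⟩⟩
  have htail : Tendsto (fun Q => ∑ q ∈ Ioc s Q, 1 / (n : ℝ) ^ ellSeq A q)
      atTop atTop := by
    refine (tendsto_atTop_add_const_left _ (-∑ q ∈ Icc 1 s, 1 / (n : ℝ) ^ ellSeq A q)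
      hsum).congr' ((eventually_ge_atTop s).mono fun Q hQ => ?_)
    have hIcc : ∀ m, Icc 1 m = Ioc 0 m := Icc_add_one_left_eq_Ioc 0
    dsimp only
    rw [hIcc, hIcc, ← sum_Ioc_consecutive _ (Nat.zero_le s) hQ]
    ring
  have hβ : ∀ q, 1 / (n : ℝ) ^ ellSeq A q ≤ 1 := fun q =>
    div_le_one_of_le₀ (one_le_pow₀ (by exact_mod_cast hn)) (by positivity)
  have hprod := (tendsto_prod_one_sub_of_tendsto_sum hβ htail).mul_const
    (spread (fun i => prodIco A s (kSeq A (s * n)) i j))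
  rw [zero_mul] at hprod
  exact tendsto_of_tendsto_of_tendsto_of_le_of_le' tendsto_const_nhds hprod
    (Eventually.of_forall fun Q => spread_nonneg _)
    ((eventually_ge_atTop s).mono fun Q hQ =>
      spread_prodIco_kSeq_le hA hdiag hδ hflow hn s j hQ)

lemma exists_tendsto_prodIco_apply
    (hsum : Tendsto (fun Q => ∑ q ∈ Icc 1 Q, 1 / (n : ℝ) ^ ellSeq A q) atTop atTop)
    (s : ℕ) (j : Fin n) : ∃ c, ∀ i, Tendsto (fun t => prodIco A s t i j) atTop (𝓝 c) := by
  have : Nonempty (Fin n) := ⟨⟨0, hn⟩⟩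
  have hinf : Monotone fun t => ⨅ i, prodIco A s t i j := monotone_nat_of_le_succ fun t => by
    rcases le_or_gt s t with hst | hts
    · rw [prodIco_succ A hst]
      exact iInf_le_iInf_mulVec (hA t) (x := fun i => prodIco A s t i j)
    · rw [prodIco_of_le A hts.le, prodIco_of_le A hts]
  have hsup : Antitone fun t => ⨆ i, prodIco A s t i j := antitone_nat_of_succ_le fun t => by
    rcases le_or_gt s t with hst | hts
    · rw [prodIco_succ A hst]
      exact iSup_mulVec_le_iSup (hA t) (x := fun i => prodIco A s t i j)
    · rw [prodIco_of_le A hts.le, prodIco_of_le A hts]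
  have hφ : Tendsto (fun Q => kSeq A (Q * n)) atTop atTop :=
    (kSeq_strictMono hflow).tendsto_atTop.comp (tendsto_id.atTop_mul_const' hn)
  exact exists_tendsto_of_tendsto_spread hinf hsup hφ
    (tendsto_spread_prodIco_kSeq hA hdiag hδ hflow hn hsum s j)

end Ergodic

theorem ergodic_row_stochastic_general {n : ℕ} (hn : 2 ≤ n)
    (A : ℕ → Matrix (Fin n) (Fin n) ℝ)
    (hRS : ∀ t, RowStochastic (A t))
    (hOD : ∀ t, OutDegreeForm (A t).transpose)
    (hflow : DirectedInfiniteFlow A)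
    (hsum : Filter.Tendsto
      (fun Q => ∑ q ∈ Finset.Icc 1 Q, 1 / (n : ℝ) ^ (ellSeq A q))
      Filter.atTop Filter.atTop) :
    ∀ s : ℕ, ∃ v : Fin n → ℝ, (∀ j, 0 ≤ v j) ∧ (∑ j, v j = 1) ∧
      ∀ i j, Filter.Tendsto (fun t => matProd A t s i j) Filter.atTop (nhds (v j)) := by
  intro s
  have hA : ∀ t, A t ∈ rowStochastic ℝ (Fin n) := fun t => mem_rowStochastic_iff_sum.2 (hRS t)
  have hP : ∀ t, matProd A t s ∈ rowStochastic ℝ (Fin n) := fun t => by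
    rw [matProd_eq_prodIco]; exact prodIco_mem_rowStochastic hA s (t + 1)
  choose v hv using exists_tendsto_prodIco_apply hA (fun t => (hOD t).diag_pos)
    (fun t _ _ h => (hOD t).one_div_le_of_pos h) hflow (by omega) hsum s
  have hlim : ∀ i j, Tendsto (fun t => matProd A t s i j) atTop (𝓝 (v j)) := fun i j => by
    simp only [matProd_eq_prodIco]
    exact (hv j i).comp (tendsto_add_atTop_nat 1)
  have i₀ : Fin n := ⟨0, by omega⟩
  refine ⟨v, fun j => ge_of_tendsto' (hlim i₀ j) fun t => nonneg_of_mem_rowStochastic (hP t),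
    tendsto_nhds_unique (tendsto_finsetSum _ fun j _ => hlim i₀ j) ?_, hlim⟩
  simpa only [sum_row_of_mem_rowStochastic (hP _)] using tendsto_const_nhds

/-- Under the hypotheses of Statement 1, if `∑_q 1/n^{ℓ_q} = ∞`,
then the sequence is ergodic: `A(t:s) → 1ₙ v(s)'` for a stochastic vector `v(s)`. -/
theorem ergodic_row_stochastic {n : ℕ} (hn : 2 ≤ n)
    (A : ℕ → Matrix (Fin n) (Fin n) ℝ)
    (hRS : ∀ t, RowStochastic (A t))
    (hOD : ∀ t, OutDegreeForm (A t).transpose)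
    (hAper : StronglyAperiodic A)
    (hflow : DirectedInfiniteFlow A)
    (hsum : Filter.Tendsto
      (fun Q => ∑ q ∈ Finset.Icc 1 Q, 1 / (n : ℝ) ^ (ellSeq A q))
      Filter.atTop Filter.atTop) :
    ∀ s : ℕ, ∃ v : Fin n → ℝ, (∀ j, 0 ≤ v j) ∧ (∑ j, v j = 1) ∧
      ∀ i j, Filter.Tendsto (fun t => matProd A t s i j) Filter.atTop (nhds (v j)) :=
  ergodic_row_stochastic_general hn A hRS hOD hflow hsum
end
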